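/- (Free system, maximal squeezing.) Fix n ≥ 1 and N ≥ 0, and set A = −(1/2)𝟙_{2n} and D = (1+2N)𝟙_{2n}. Then every real symmetric 2n×2n matrix σ satisfying σ + iΩ ≥ 0 and Aσ + σAᵀ + D ≥ 0 (equivalently σ ≤ (1+2N)𝟙_{2n}) has smallest eigenvalue λ₁↑ ≥ 1/(1+2N). -/

import Mathlib

open Matrix
open scoped ComplexOrder

open Classical in
/-- The eigenvalues of a matrix in increasing order (junk value `0` if not Hermitian). -/
noncomputable def eigUp {d : ℕ} (M : Matrix (Fin d) (Fin d) ℝ) : Fin d → ℝ :=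
  if h : M.IsHermitian then h.eigenvalues ∘ Tuple.sort h.eigenvalues else 0

/-- The eigenvalues of a matrix in decreasing order. -/
noncomputable def eigDown {d : ℕ} (M : Matrix (Fin d) (Fin d) ℝ) (j : Fin d) : ℝ :=
  eigUp M j.rev

/-- The standard symplectic form on `2n` canonical variables: block diagonal with
blocks `[[0,1],[-1,0]]`. -/
def Omega (n : ℕ) : Matrix (Fin (2*n)) (Fin (2*n)) ℝ :=
  Matrix.of fun i j =>
    if (i : ℕ) + 1 = (j : ℕ) ∧ (i : ℕ) % 2 = 0 then 1
    else if (j : ℕ) + 1 = (i : ℕ) ∧ (j : ℕ) % 2 = 0 then -1 else 0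

/-- Partial transposition matrix `T = 𝟙₂^{⊕ l} ⊕ σz^{⊕ (n-l)}` for the bipartition of the
first `l` versus the last `n - l` modes. -/
def Tmat (n l : ℕ) : Matrix (Fin (2*n)) (Fin (2*n)) ℝ :=
  Matrix.diagonal fun i => if (i : ℕ) / 2 < l ∨ (i : ℕ) % 2 = 0 then 1 else -1

/-- The partially transposed symplectic form `Ω̃ = T Ω T`. -/
def OmegaPT (n l : ℕ) : Matrix (Fin (2*n)) (Fin (2*n)) ℝ :=
  Tmat n l * Omega n * Tmat n l

open Classical in
/-- The positive square root of a positive semidefinite matrix (junk value `0` otherwise). -/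
noncomputable def msqrt {d : ℕ} (M : Matrix (Fin d) (Fin d) ℝ) : Matrix (Fin d) (Fin d) ℝ :=
  if h : M.PosSemidef then
    (h.1.eigenvectorUnitary : Matrix (Fin d) (Fin d) ℝ) * diagonal (Real.sqrt ∘ h.1.eigenvalues) *
      (star h.1.eigenvectorUnitary : Matrix (Fin d) (Fin d) ℝ)
  else 0

/-- `σ + iΩ ≥ 0`: the Robertson–Schrödinger condition for a real symmetric matrix `σ`
to be a bona fide covariance matrix. -/
def IsCM (n : ℕ) (σ : Matrix (Fin (2*n)) (Fin (2*n)) ℝ) : Prop :=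
  σ.IsSymm ∧
    (σ.map (Complex.ofReal ·) + Complex.I • (Omega n).map (Complex.ofReal ·)).PosSemidef

/-- `ν̃₋²`, the square of the smallest partially transposed symplectic eigenvalue of `σ`, for
the bipartition of the first `l` versus the remaining modes: the smallest eigenvalue of
`σ^{1/2} Ω̃ᵀ σ Ω̃ σ^{1/2}`. -/
noncomputable def nuSq (n l : ℕ) (σ : Matrix (Fin (2*n)) (Fin (2*n)) ℝ) : ℝ :=
  sInf (spectrum ℝ (msqrt σ * (OmegaPT n l)ᵀ * σ * OmegaPT n l * msqrt σ))

/-- `ν̃₋`, the smallest partially transposed symplectic eigenvalue of `σ`. -/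
noncomputable def nuMin (n l : ℕ) (σ : Matrix (Fin (2*n)) (Fin (2*n)) ℝ) : ℝ :=
  Real.sqrt (nuSq n l σ)

/-- The logarithmic negativity `E_N(σ) = max (0, −log₂ ν̃₋)`. -/
noncomputable def logNeg (n l : ℕ) (σ : Matrix (Fin (2*n)) (Fin (2*n)) ℝ) : ℝ :=
  max 0 (-(Real.logb 2 (nuMin n l σ)))

/-!
Let `v` be a unit eigenvector of `σ` with eigenvalue `λ` and put `u = Ω v`, again a unit vector.
Evaluating the Hermitian form of `σ + iΩ` on `α v + iβ u` gives the real quadratic form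
`α² λ + 2αβ + β² uᵀσu ≥ 0`, whose discriminant yields `λ · uᵀσu ≥ 1`. The Lyapunov condition
for the free dynamics reads `σ ≤ (1 + 2N) 𝟙`, so `uᵀσu ≤ 1 + 2N` and `λ ≥ 1/(1 + 2N)`.
-/

lemma Omega_transpose (n : ℕ) : (Omega n)ᵀ = -Omega n := by
  ext i j
  simp only [transpose_apply, Matrix.neg_apply, Omega, of_apply]
  split_ifs <;> first | omega | norm_num

lemma Omega_mul_self (n : ℕ) : Omega n * Omega n = -1 := by
  ext i j
  have hi := i.isLt
  -- row `i` of `Ω` has its only nonzero entry in column `k`, the other quadrature of the mode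
  obtain ⟨k, hk⟩ :
      ∃ k : Fin (2*n), (k : ℕ) = if (i : ℕ) % 2 = 0 then (i : ℕ) + 1 else (i : ℕ) - 1 :=
    ⟨⟨if (i : ℕ) % 2 = 0 then (i : ℕ) + 1 else (i : ℕ) - 1, by split_ifs <;> omega⟩, rfl⟩
  rw [mul_apply, Finset.sum_eq_single k]
  · simp only [Omega, of_apply, Matrix.neg_apply, one_apply, Fin.ext_iff]
    split_ifs at hk ⊢ <;> first | omega | norm_num
  · intro m _ hm
    have hm' := Fin.val_ne_of_ne hm
    simp only [Omega, of_apply]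
    split_ifs at hk ⊢ <;> first | omega | norm_num
  · simp

section ComplexStructure

variable {ι : Type*} [Fintype ι]

lemma re_quadForm_ofReal_add_I_smul (S J : Matrix ι ι ℝ) (x y : ι → ℝ) (α β : ℝ) :
    (star (fun k => (⟨α * x k, β * y k⟩ : ℂ)) ⬝ᵥ
      ((S.map (Complex.ofReal ·) + Complex.I • J.map (Complex.ofReal ·)) *ᵥ
        fun k => (⟨α * x k, β * y k⟩ : ℂ))).re =
      α ^ 2 * (x ⬝ᵥ S *ᵥ x) + β ^ 2 * (y ⬝ᵥ S *ᵥ y) - α * β * (x ⬝ᵥ J *ᵥ y - y ⬝ᵥ J *ᵥ x) := by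
  simp only [dotProduct, mulVec, Finset.mul_sum, Complex.re_sum, ← Finset.sum_sub_distrib,
    ← Finset.sum_add_distrib]
  refine Finset.sum_congr rfl fun j _ => Finset.sum_congr rfl fun k _ => ?_
  simp only [Pi.star_apply, RCLike.star_def, Matrix.add_apply, map_apply, Matrix.smul_apply,
    smul_eq_mul, Complex.mul_re, Complex.conj_re, Complex.add_re, Complex.ofReal_re, Complex.I_re,
    zero_mul, Complex.I_im, Complex.ofReal_im, mul_zero, sub_self, add_zero, Complex.add_im,
    Complex.mul_im, one_mul, zero_add, Complex.conj_im, neg_mul, sub_neg_eq_add]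
  ring

lemma quadForm_nonneg_of_posSemidef {S J : Matrix ι ι ℝ}
    (h : (S.map (Complex.ofReal ·) + Complex.I • J.map (Complex.ofReal ·)).PosSemidef)
    (x y : ι → ℝ) (α β : ℝ) :
    0 ≤ α ^ 2 * (x ⬝ᵥ S *ᵥ x) + β ^ 2 * (y ⬝ᵥ S *ᵥ y) -
      α * β * (x ⬝ᵥ J *ᵥ y - y ⬝ᵥ J *ᵥ x) := by
  rw [← re_quadForm_ofReal_add_I_smul]
  exact (Complex.nonneg_iff.mp (h.dotProduct_mulVec_nonneg _)).1

lemma sq_sub_dotProduct_mulVec_le_of_posSemidef {S J : Matrix ι ι ℝ}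
    (h : (S.map (Complex.ofReal ·) + Complex.I • J.map (Complex.ofReal ·)).PosSemidef)
    (x y : ι → ℝ) :
    (x ⬝ᵥ J *ᵥ y - y ⬝ᵥ J *ᵥ x) ^ 2 ≤ 4 * (x ⬝ᵥ S *ᵥ x) * (y ⬝ᵥ S *ᵥ y) := by
  have hd := discrim_le_zero (a := x ⬝ᵥ S *ᵥ x) (b := -(x ⬝ᵥ J *ᵥ y - y ⬝ᵥ J *ᵥ x))
    (c := y ⬝ᵥ S *ᵥ y) fun α => by linarith [quadForm_nonneg_of_posSemidef h x y α 1]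
  rw [discrim] at hd
  linarith

variable [DecidableEq ι] {J : Matrix ι ι ℝ}

lemma dotProduct_mulVec_mulVec_self (hJ : J * J = -1) (v : ι → ℝ) :
    v ⬝ᵥ J *ᵥ (J *ᵥ v) = -(v ⬝ᵥ v) := by
  rw [mulVec_mulVec, hJ, neg_mulVec, one_mulVec, dotProduct_neg]

lemma mulVec_dotProduct_mulVec_self (hJt : Jᵀ = -J) (hJ : J * J = -1) (v : ι → ℝ) :
    (J *ᵥ v) ⬝ᵥ (J *ᵥ v) = v ⬝ᵥ v := by
  rw [dotProduct_mulVec, ← mulVec_transpose, hJt, neg_mulVec, mulVec_mulVec, hJ, neg_mulVec,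
    one_mulVec, neg_neg]

lemma one_le_mul_of_posSemidef_of_mulVec_eq_smul (hJt : Jᵀ = -J) (hJ : J * J = -1)
    {S : Matrix ι ι ℝ}
    (h : (S.map (Complex.ofReal ·) + Complex.I • J.map (Complex.ofReal ·)).PosSemidef)
    {v : ι → ℝ} {μ : ℝ} (hv : S *ᵥ v = μ • v) (hvv : v ⬝ᵥ v = 1) :
    1 ≤ μ * ((J *ᵥ v) ⬝ᵥ S *ᵥ (J *ᵥ v)) := by
  have := sq_sub_dotProduct_mulVec_le_of_posSemidef h v (J *ᵥ v)
  rw [dotProduct_mulVec_mulVec_self hJ, mulVec_dotProduct_mulVec_self hJt hJ, hv,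
    dotProduct_smul, smul_eq_mul, hvv] at this
  linarith

lemma inv_le_of_posSemidef_of_mulVec_eq_smul (hJt : Jᵀ = -J) (hJ : J * J = -1)
    {S : Matrix ι ι ℝ}
    (h : (S.map (Complex.ofReal ·) + Complex.I • J.map (Complex.ofReal ·)).PosSemidef)
    {c : ℝ} (hc : (c • 1 - S).PosSemidef)
    {v : ι → ℝ} {μ : ℝ} (hv : S *ᵥ v = μ • v) (hvv : v ⬝ᵥ v = 1) :
    c⁻¹ ≤ μ := by
  set u := J *ᵥ v
  have hμ : 0 ≤ μ := by
    simpa [hv, hvv] using quadForm_nonneg_of_posSemidef h v 0 1 0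
  have hu : u ⬝ᵥ S *ᵥ u ≤ c := by
    have := hc.dotProduct_mulVec_nonneg u
    rw [star_trivial, sub_mulVec, smul_mulVec, one_mulVec, dotProduct_sub, dotProduct_smul,
      smul_eq_mul, mulVec_dotProduct_mulVec_self hJt hJ, hvv, mul_one] at this
    linarith
  have hμc : 1 ≤ μ * c := (one_le_mul_of_posSemidef_of_mulVec_eq_smul hJt hJ h hv hvv).trans
    (mul_le_mul_of_nonneg_left hu hμ)
  have hc0 : 0 < c := pos_of_mul_pos_right (one_pos.trans_le hμc) hμ
  rwa [inv_le_iff_one_le_mul₀' hc0, mul_comm]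

lemma Matrix.IsHermitian.eigenvectorBasis_dotProduct_self {S : Matrix ι ι ℝ} (hS : S.IsHermitian)
    (i : ι) : ⇑(hS.eigenvectorBasis i) ⬝ᵥ ⇑(hS.eigenvectorBasis i) = 1 := by
  have := orthonormal_iff_ite.mp hS.eigenvectorBasis.orthonormal i i
  rwa [if_pos rfl, EuclideanSpace.inner_eq_star_dotProduct, star_trivial] at this

end ComplexStructure

/-- **Free system, maximal squeezing.** For the free thermal dynamics
`A = −(1/2)𝟙` and `D = (1+2N)𝟙`, every covariance matrix `σ` satisfying the stabilising
condition `Aσ + σAᵀ + D ≥ 0` has smallest eigenvalue `λ₁↑ ≥ 1/(1+2N)`. -/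
theorem free_system_maximal_squeezing (n : ℕ) (hn : 1 ≤ n) (N : ℝ)
    (A D σ : Matrix (Fin (2*n)) (Fin (2*n)) ℝ)
    (hA : A = (-(1/2) : ℝ) • 1) (hD : D = (1 + 2*N) • 1)
    (hCM : IsCM n σ) (hLyap : (A * σ + σ * Aᵀ + D).PosSemidef) :
    1 / (1 + 2*N) ≤ eigUp σ ⟨0, by omega⟩ := by
  have hH : σ.IsHermitian := by
    rw [IsHermitian, conjTranspose_eq_transpose_of_trivial]
    exact hCM.1
  have hσ_le : ((1 + 2*N) • (1 : Matrix (Fin (2*n)) (Fin (2*n)) ℝ) - σ).PosSemidef := by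
    convert hLyap using 1
    rw [hA, hD, transpose_smul, transpose_one, smul_mul, Matrix.mul_smul, Matrix.one_mul,
      Matrix.mul_one]
    module
  rw [eigUp, dif_pos hH, Function.comp_apply, one_div]
  exact inv_le_of_posSemidef_of_mulVec_eq_smul (Omega_transpose n) (Omega_mul_self n) hCM.2
    hσ_le (hH.mulVec_eigenvectorBasis _) (hH.eigenvectorBasis_dotProduct_self _)
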